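/- Let J, B ∈ ℝ. There exists a constant C > 0 such that for all N ≥ 2, ‖ h^{CW}_{1/N} − Q_{1/N}(h₀^{CW}) ‖ ≤ C/N, where ‖·‖ is the operator norm on (ℂ²)^{⊗N}, h^{CW}_{1/N} is the quantum Curie–Weiss Hamiltonian and h₀^{CW}(x,y,z) = −(J z²/2 + B x). -/

import Mathlib

open scoped ComplexConjugate
open MeasureTheory Filter Topology

noncomputable section

/-! ## Setting

`M₂(ℂ)^{⊗N}` is realized as matrices indexed by `Fin N → Fin 2`, acting on
`(ℂ²)^{⊗N} = EuclideanSpace ℂ (Fin N → Fin 2)`. -/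

/-- `M₂(ℂ)^{⊗N}`, realized as matrices indexed by `Fin N → Fin 2`. -/
abbrev TP (N : ℕ) : Type := Matrix (Fin N → Fin 2) (Fin N → Fin 2) ℂ

/-- The Pauli matrices `σ₁, σ₂, σ₃`. -/
def pauli : Fin 3 → Matrix (Fin 2) (Fin 2) ℂ
  | 0 => !![0, 1; 1, 0]
  | 1 => !![0, -Complex.I; Complex.I, 0]
  | 2 => !![1, 0; 0, -1]

/-- The symmetrization operator `S_N` on `M₂(ℂ)^{⊗N}`: the average over all permutations
of the tensor factors. -/
def symmMat (N : ℕ) (A : TP N) : TP N :=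
  (N.factorial : ℂ)⁻¹ • ∑ σ : Equiv.Perm (Fin N), Matrix.of fun i j => A (i ∘ σ) (j ∘ σ)

/-- `b ⊗ I₂^{⊗(N−M)}` (junk value `0` if `M > N`). -/
def embedMat (M N : ℕ) (b : TP M) : TP N :=
  if h : M ≤ N then
    Matrix.of fun i j =>
      b (fun k => i (Fin.castLE h k)) (fun k => j (Fin.castLE h k)) *
        ∏ k ∈ Finset.univ.filter (fun k : Fin N => M ≤ (k : ℕ)),
          (if i k = j k then (1 : ℂ) else 0)
  else 0

/-- `S_{M,N}(b) = S_N(b ⊗ I₂^{⊗(N−M)})`. -/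
def SMN (M N : ℕ) (b : TP M) : TP N := symmMat N (embedMat M N b)

/-- The elementary tensor `σ_{m 0} ⊗ ⋯ ⊗ σ_{m (L-1)}` as a matrix on `(ℂ²)^{⊗L}`. -/
def pauliTensor {L : ℕ} (m : Fin L → Fin 3) : TP L :=
  Matrix.of fun i j => ∏ k, pauli (m k) (i k) (j k)

/-- For a monomial with exponents `d`, the list of its variable indices (first `d 0` copies
of `0`, then `d 1` copies of `1`, then `d 2` copies of `2`). -/
def monFun (d : Fin 3 →₀ ℕ) : Fin (d 0 + d 1 + d 2) → Fin 3 := fun k =>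
  if (k : ℕ) < d 0 then 0 else if (k : ℕ) < d 0 + d 1 then 1 else 2

/-- Quantization of the monomial `x^{d 0} y^{d 1} z^{d 2}`:
`S_{L,N}(σ_{j₁} ⊗ ⋯ ⊗ σ_{j_L})` if `L ≤ N`, and `0` if `L > N`. -/
def Qmon (N : ℕ) (d : Fin 3 →₀ ℕ) : TP N :=
  SMN (d 0 + d 1 + d 2) N (pauliTensor (monFun d))

/-- The quantization map `Q_{1/N}`: the linear extension of `Qmon` to all complex
polynomials in the three real variables `x, y, z`. -/
def Q (N : ℕ) (p : MvPolynomial (Fin 3) ℂ) : TP N :=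
  ∑ d ∈ p.support, p.coeff d • Qmon N d

/-- The symmetric subspace `Sym^N(ℂ²) ⊆ (ℂ²)^{⊗N}` (the fixed points of the permutation
action, i.e. the range of the vector symmetrizer). -/
def SymSub (N : ℕ) : Submodule ℂ (EuclideanSpace ℂ (Fin N → Fin 2)) where
  carrier := {v | ∀ σ : Equiv.Perm (Fin N), ∀ i, v (i ∘ σ) = v i}
  add_mem' := by
    intro a b ha hb σ i
    have : (a + b) (i ∘ σ) = a (i ∘ σ) + b (i ∘ σ) := rfl
    rw [this, ha σ i, hb σ i]; rfl
  zero_mem' := by intro σ i; rfl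
  smul_mem' := by
    intro c v hv σ i
    have : (c • v) (i ∘ σ) = c • (v (i ∘ σ)) := rfl
    rw [this, hv σ i]; rfl

/-- The vector symmetrizer. -/
def symVec (N : ℕ) (v : EuclideanSpace ℂ (Fin N → Fin 2)) :
    EuclideanSpace ℂ (Fin N → Fin 2) :=
  WithLp.toLp 2 (fun i => (N.factorial : ℂ)⁻¹ * ∑ σ : Equiv.Perm (Fin N), v (i ∘ σ))

lemma symVec_mem (N : ℕ) (v : EuclideanSpace ℂ (Fin N → Fin 2)) :
    symVec N v ∈ SymSub N := by
  intro τ i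
  show (N.factorial : ℂ)⁻¹ * ∑ σ : Equiv.Perm (Fin N), v ((i ∘ τ) ∘ σ)
      = (N.factorial : ℂ)⁻¹ * ∑ σ : Equiv.Perm (Fin N), v (i ∘ σ)
  congr 1
  exact Fintype.sum_equiv (Equiv.mulLeft τ) _ _ (fun σ => by rfl)

/-- The vector symmetrizer as a linear map onto the symmetric subspace. -/
def symProj (N : ℕ) : EuclideanSpace ℂ (Fin N → Fin 2) →ₗ[ℂ] SymSub N where
  toFun v := ⟨symVec N v, symVec_mem N v⟩
  map_add' v w := by
    apply Subtype.ext
    apply WithLp.ofLp_injective 2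
    funext i
    show (N.factorial : ℂ)⁻¹ * ∑ σ : Equiv.Perm (Fin N), (v + w) (i ∘ σ) = _
    have h : ∀ σ : Equiv.Perm (Fin N), (v + w) (i ∘ σ) = v (i ∘ σ) + w (i ∘ σ) :=
      fun _ => rfl
    simp only [h, Finset.sum_add_distrib]
    show _ = (N.factorial : ℂ)⁻¹ * (∑ σ : Equiv.Perm (Fin N), v (i ∘ σ))
        + (N.factorial : ℂ)⁻¹ * (∑ σ : Equiv.Perm (Fin N), w (i ∘ σ))
    ring
  map_smul' c v := by
    apply Subtype.ext
    apply WithLp.ofLp_injective 2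
    funext i
    show (N.factorial : ℂ)⁻¹ * ∑ σ : Equiv.Perm (Fin N), (c • v) (i ∘ σ) = _
    have h : ∀ σ : Equiv.Perm (Fin N), (c • v) (i ∘ σ) = c * v (i ∘ σ) := fun _ => rfl
    simp only [h, ← Finset.mul_sum]
    show _ = c * ((N.factorial : ℂ)⁻¹ * (∑ σ : Equiv.Perm (Fin N), v (i ∘ σ)))
    ring

/-- The restriction (compression) of a matrix `A` on `(ℂ²)^{⊗N}` to the symmetric subspace
`Sym^N(ℂ²)`, as a continuous linear operator; when `A` leaves `Sym^N(ℂ²)` invariant (as do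
all operators considered here) this is exactly the restriction `A|_{Sym^N(ℂ²)}`. -/
def restrSym (N : ℕ) (A : TP N) : SymSub N →L[ℂ] SymSub N :=
  LinearMap.toContinuousLinearMap
    ((symProj N) ∘ₗ (Matrix.toEuclideanLin A) ∘ₗ (SymSub N).subtype)

/-- The unit sphere `S² ⊂ ℝ³`. -/
abbrev S2 : Type := Metric.sphere (0 : EuclideanSpace ℝ (Fin 3)) 1

/-- Spherical coordinates `(θ, φ) ↦ (sin θ cos φ, sin θ sin φ, cos θ)`. -/
def sphCoord (a : ℝ × ℝ) : EuclideanSpace ℝ (Fin 3) :=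
  WithLp.toLp 2 ![Real.sin a.1 * Real.cos a.2, Real.sin a.1 * Real.sin a.2, Real.cos a.1]

lemma sphCoord_mem (a : ℝ × ℝ) :
    sphCoord a ∈ Metric.sphere (0 : EuclideanSpace ℝ (Fin 3)) 1 := by
  have h : ‖sphCoord a‖ = 1 := by
    rw [EuclideanSpace.norm_eq]
    have : ∑ i : Fin 3, sphCoord a i ^ 2 = 1 := by
      have hs := Real.sin_sq_add_cos_sq a.1
      have hc := Real.sin_sq_add_cos_sq a.2
      simp [sphCoord, Fin.sum_univ_three]
      nlinarith [hs, hc]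
    have h2 : ∀ i : Fin 3, ‖sphCoord a i‖ ^ 2 = sphCoord a i ^ 2 := fun i => sq_abs _
    simp only [h2, this]
    exact Real.sqrt_one
  simpa [mem_sphere_iff_norm] using h

/-- The standard surface measure `dΩ` on `S²` (of total mass `4π`), realized as the
push-forward of `sin θ dθ dφ` on `[0,π] × (−π,π]` under spherical coordinates. -/
def μS2 : Measure S2 :=
  Measure.map (fun a : ℝ × ℝ => (⟨sphCoord a, sphCoord_mem a⟩ : S2))
    (((volume : Measure (ℝ × ℝ)).restrict
        (Set.Icc (0 : ℝ) Real.pi ×ˢ Set.Ioc (-Real.pi) Real.pi)).withDensity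
      fun a => ENNReal.ofReal (Real.sin a.1))

/-- The polar angle `θ ∈ [0, π]` of a point of `S²`. -/
def thetaOf (Ω : S2) : ℝ := Real.arccos ((Ω : EuclideanSpace ℝ (Fin 3)) 2)

/-- The azimuthal angle `φ ∈ (−π, π]` of a point of `S²`. -/
def phiOf (Ω : S2) : ℝ :=
  Complex.arg (((Ω : EuclideanSpace ℝ (Fin 3)) 0 : ℂ) +
    ((Ω : EuclideanSpace ℝ (Fin 3)) 1 : ℂ) * Complex.I)

/-- The coherent spin state `|Ω⟩₁ = cos(θ/2) e₁ + e^{iφ} sin(θ/2) e₂ ∈ ℂ²`. -/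
def cs1 (Ω : S2) : Fin 2 → ℂ :=
  ![(Real.cos (thetaOf Ω / 2) : ℂ),
    Complex.exp (Complex.I * (phiOf Ω : ℂ)) * (Real.sin (thetaOf Ω / 2) : ℂ)]

/-- The `N`-fold coherent spin state `|Ω⟩_N = |Ω⟩₁^{⊗N} ∈ (ℂ²)^{⊗N}`. -/
def csN (N : ℕ) (Ω : S2) : EuclideanSpace ℂ (Fin N → Fin 2) :=
  WithLp.toLp 2 (fun i => ∏ k, cs1 Ω (i k))

/-- The matrix of the weak integral `((N+1)/(4π)) ∫_{S²} f(Ω) |Ω⟩⟨Ω|_N dΩ` on `(ℂ²)^{⊗N}`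
(entrywise Bochner integral, which in finite dimension coincides with the weak integral). -/
def Q'mat (N : ℕ) (f : S2 → ℂ) : TP N :=
  Matrix.of fun i j =>
    ((N + 1 : ℂ) / (4 * (Real.pi : ℂ))) * ∫ Ω, f Ω * csN N Ω i * conj (csN N Ω j) ∂μS2

/-- The coherent-state (Berezin) quantization map `Q'_{1/N}`, as an operator on
`Sym^N(ℂ²)` (the range of `|Ω⟩⟨Ω|_N` lies in `Sym^N(ℂ²)`, so the compression coincides
with the operator defined by the weak integral). -/
def Q' (N : ℕ) (f : S2 → ℂ) : SymSub N →L[ℂ] SymSub N := restrSym N (Q'mat N f)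

/-- The restriction of a polynomial (in three real variables) to the unit sphere `S²`. -/
def restrictS2 (p : MvPolynomial (Fin 3) ℂ) : S2 → ℂ :=
  fun Ω => MvPolynomial.eval (fun i => ((Ω : EuclideanSpace ℝ (Fin 3)) i : ℂ)) p

/-- The restriction to `S²` as a linear map. -/
def restrictS2Lin : MvPolynomial (Fin 3) ℂ →ₗ[ℂ] (S2 → ℂ) where
  toFun := restrictS2
  map_add' p q := by funext Ω; simp [restrictS2]
  map_smul' c p := by funext Ω; simp [restrictS2]

/-- `P_N(S²)`: the space of restrictions to `S²` of complex polynomials of degree `≤ N`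
in three real variables. -/
def PNS2 (N : ℕ) : Submodule ℂ (S2 → ℂ) where
  carrier := {g | ∃ p : MvPolynomial (Fin 3) ℂ, p.totalDegree ≤ N ∧ g = restrictS2 p}
  add_mem' := by
    rintro a b ⟨p, hp, rfl⟩ ⟨q, hq, rfl⟩
    exact ⟨p + q, le_trans (MvPolynomial.totalDegree_add p q) (by omega),
      by funext Ω; simp [restrictS2]⟩
  zero_mem' := ⟨0, by simp, by funext Ω; simp [restrictS2]⟩
  smul_mem' := by
    rintro c a ⟨p, hp, rfl⟩
    exact ⟨c • p, le_trans (MvPolynomial.totalDegree_smul_le c p) hp,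
      by funext Ω; simp [restrictS2]⟩

/-- The `N`-fold tensor power `U^{⊗N}` of a `2×2` matrix, on `(ℂ²)^{⊗N}`. -/
def tpow (N : ℕ) (U : Matrix (Fin 2) (Fin 2) ℂ) : TP N :=
  Matrix.of fun i j => ∏ k, U (i k) (j k)

/-- `σ_k(j) = I₂ ⊗ ⋯ ⊗ σ_k ⊗ ⋯ ⊗ I₂` with the Pauli matrix `σ_k` in the `j`-th slot. -/
def pauliAt (N : ℕ) (k : Fin 3) (j : Fin N) : TP N :=
  Matrix.of fun a b =>
    pauli k (a j) (b j) *
      ∏ t ∈ Finset.univ.filter (fun t : Fin N => t ≠ j), (if a t = b t then (1 : ℂ) else 0)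

/-- The quantum Curie–Weiss Hamiltonian
`h^{CW}_{1/N} = (1/N)( −(J/(2N)) Σ_{i,j} σ₃(i)σ₃(j) − B Σ_j σ₁(j))`. -/
def hCW (J B : ℝ) (N : ℕ) : TP N :=
  ((N : ℂ))⁻¹ • ((-(J / (2 * N)) : ℂ) • ∑ i : Fin N, ∑ j : Fin N,
      pauliAt N 2 i * pauliAt N 2 j
    + (-(B : ℂ)) • ∑ j : Fin N, pauliAt N 0 j)

open scoped Classical in
/-- The action of a (special orthogonal) matrix on the unit sphere `S²`
(junk value if the image does not lie on the sphere). -/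
def rotAct (R : Matrix (Fin 3) (Fin 3) ℝ) (Ω : S2) : S2 :=
  if h : (WithLp.toLp 2 (R.mulVec (Ω : EuclideanSpace ℝ (Fin 3))) : EuclideanSpace ℝ (Fin 3)) ∈
      Metric.sphere (0 : EuclideanSpace ℝ (Fin 3)) 1
  then ⟨WithLp.toLp 2 (R.mulVec (Ω : EuclideanSpace ℝ (Fin 3))), h⟩ else Ω

/-- A polynomial in three variables is harmonic if its Laplacian vanishes. -/
def IsHarmonic (p : MvPolynomial (Fin 3) ℂ) : Prop :=
  ∑ i : Fin 3, MvPolynomial.pderiv i (MvPolynomial.pderiv i p) = 0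

/-- The polynomial `x² + y² + z² − 1`. -/
def sphPoly : MvPolynomial (Fin 3) ℂ :=
  MvPolynomial.X 0 ^ 2 + MvPolynomial.X 1 ^ 2 + MvPolynomial.X 2 ^ 2 - 1

/-- The Dicke state `|k, N−k⟩ ∈ Sym^N(ℂ²)`: `binom(N,k)^{-1/2}` times the sum of all
elementary tensors with exactly `k` factors `e₂` (and `N−k` factors `e₁`). -/
def dicke (N k : ℕ) : EuclideanSpace ℂ (Fin N → Fin 2) :=
  WithLp.toLp 2 (fun i => if (Finset.univ.filter fun t => i t = 1).card = k
    then ((Real.sqrt (N.choose k) : ℂ))⁻¹ else 0)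

/-- The operator norm of a matrix acting on `(ℂ²)^{⊗N}` with its Euclidean (ℓ²) norm. -/
def matOpNorm {N : ℕ} (A : TP N) : ℝ :=
  ‖LinearMap.toContinuousLinearMap (Matrix.toEuclideanLin A)‖

/-- The classical Curie–Weiss Hamiltonian `h₀^{CW}(x,y,z) = −(J z²/2 + B x)` as a
polynomial in three real variables. -/
def hCW0 (J B : ℝ) : MvPolynomial (Fin 3) ℂ :=
  -(MvPolynomial.C ((J : ℂ) / 2) * MvPolynomial.X 2 ^ 2 +
    MvPolynomial.C (B : ℂ) * MvPolynomial.X 0)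

/-! Both operators are combinations of `σ₁`-terms and `σ₃σ₃`-terms. The `σ₁`-terms agree
exactly, since `S_{1,N}(σ₁) = (1/N) Σ_j σ₁(j)`. The `σ₃σ₃`-terms are diagonal in the
computational basis, with entries given by the magnetization `m = Σ_j ±1`: averaging over
permutations gives `S_{2,N}(σ₃ ⊗ σ₃) = (m² − N)/(N(N − 1))`, against `m²/N²` in `h^{CW}_{1/N}`.
So the difference is diagonal with entries `(J/2)(m² − N²)/(N²(N − 1))`, which are at most
`|J|/(2(N − 1)) ≤ |J|/N` in absolute value because `|m| ≤ N`. -/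

open Matrix Finset
open scoped Nat Matrix.Norms.L2Operator

theorem sum_perm_apply_zero {M : Type*} [AddCommMonoid M] {n : ℕ} (f : Fin (n + 1) → M) :
    ∑ σ : Equiv.Perm (Fin (n + 1)), f (σ 0) = n ! • ∑ i, f i := by
  rw [← Equiv.sum_comp Equiv.Perm.decomposeFin.symm, Fintype.sum_prod_type]
  simp [Equiv.Perm.decomposeFin_symm_apply_zero, Finset.smul_sum, Fintype.card_perm]

theorem sum_perm_mul_apply_zero_apply_one {R : Type*} [CommRing R] {n : ℕ}
    (g h : Fin (n + 2) → R) :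
    ∑ σ : Equiv.Perm (Fin (n + 2)), g (σ 0) * h (σ 1) =
      n ! * ((∑ i, g i) * (∑ i, h i) - ∑ i, g i * h i) := by
  rw [← Equiv.sum_comp Equiv.Perm.decomposeFin.symm, Fintype.sum_prod_type]
  have hswap (p : Fin (n + 2)) :
      ∑ τ : Equiv.Perm (Fin (n + 1)), h (Equiv.swap 0 p (τ 0).succ) = n ! * (∑ i, h i - h p) := by
    rw [sum_perm_apply_zero (fun q => h (Equiv.swap 0 p q.succ)), nsmul_eq_mul,
      ← Equiv.sum_comp (Equiv.swap 0 p) h, Fin.sum_univ_succ (fun i => h (Equiv.swap 0 p i)),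
      Equiv.swap_apply_left]
    ring
  simp only [Equiv.Perm.decomposeFin_symm_apply_zero,
    show (1 : Fin (n + 2)) = (0 : Fin (n + 1)).succ from rfl,
    Equiv.Perm.decomposeFin_symm_apply_succ, ← Finset.mul_sum, hswap]
  rw [Finset.sum_mul, ← Finset.sum_sub_distrib, Finset.mul_sum]
  exact Finset.sum_congr rfl fun p _ => by ring

theorem prod_diagonal_apply {ι κ R : Type*} [Fintype ι] [DecidableEq ι] [DecidableEq κ]
    [CommSemiring R] (d : κ → R) (i j : ι → κ) :
    ∏ k, diagonal d (i k) (j k) = diagonal (fun i => ∏ k, d (i k)) i j := by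
  by_cases hij : i = j
  · simp [hij]
  · obtain ⟨k, hk⟩ := Function.ne_iff.mp hij
    rw [diagonal_apply_ne _ hij]
    exact Finset.prod_eq_zero (Finset.mem_univ k) (diagonal_apply_ne _ hk)

theorem symmMat_apply (N : ℕ) (A : TP N) (i j : Fin N → Fin 2) :
    symmMat N A i j = (N ! : ℂ)⁻¹ * ∑ σ : Equiv.Perm (Fin N), A (i ∘ σ) (j ∘ σ) := by
  simp [symmMat, Matrix.sum_apply]

theorem symmMat_diagonal (N : ℕ) (d : (Fin N → Fin 2) → ℂ) :
    symmMat N (diagonal d) =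
      diagonal fun i => (N ! : ℂ)⁻¹ * ∑ σ : Equiv.Perm (Fin N), d (i ∘ σ) := by
  ext i j
  have hcomp (σ : Equiv.Perm (Fin N)) : i ∘ σ = j ∘ σ ↔ i = j :=
    σ.surjective.injective_comp_right.eq_iff
  by_cases hij : i = j
  · simp [hij, symmMat_apply]
  · simp [symmMat_apply, hcomp, hij]

theorem embedMat_diagonal {M N : ℕ} (h : M ≤ N) (d : (Fin M → Fin 2) → ℂ) :
    embedMat M N (diagonal d) = diagonal fun i => d fun k => i (Fin.castLE h k) := by
  ext i j
  rw [embedMat, dif_pos h, of_apply]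
  by_cases hij : i = j
  · simp [hij]
  obtain ⟨k, hk⟩ := Function.ne_iff.mp hij
  rw [diagonal_apply_ne _ hij]
  by_cases hkM : M ≤ k
  · exact mul_eq_zero_of_right _ <|
      Finset.prod_eq_zero (Finset.mem_filter.mpr ⟨Finset.mem_univ k, hkM⟩) (if_neg hk)
  · refine mul_eq_zero_of_left (diagonal_apply_ne _ fun hres => hk ?_) _
    exact congrFun hres ⟨k, by omega⟩

def zSpin : Fin 2 → ℝ := ![1, -1]

def magnetization {N : ℕ} (i : Fin N → Fin 2) : ℝ := ∑ a, zSpin (i a)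

theorem zSpin_mul_self (x : Fin 2) : zSpin x * zSpin x = 1 := by
  fin_cases x <;> norm_num [zSpin]

theorem abs_magnetization_le {N : ℕ} (i : Fin N → Fin 2) : |magnetization i| ≤ N := by
  have habs (x : Fin 2) : |zSpin x| = 1 := by fin_cases x <;> norm_num [zSpin]
  simpa [magnetization, habs] using Finset.abs_sum_le_sum_abs (fun a => zSpin (i a)) univ

theorem pauli_two_eq_diagonal : pauli 2 = diagonal fun x => (zSpin x : ℂ) := by
  ext x y
  fin_cases x <;> fin_cases y <;> simp [pauli, zSpin]

theorem pauliTensor_eq_diagonal {L : ℕ} {m : Fin L → Fin 3} (hm : ∀ k, m k = 2) :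
    pauliTensor m = diagonal fun i => ∏ k, (zSpin (i k) : ℂ) := by
  ext i j
  simp only [pauliTensor, of_apply, hm, pauli_two_eq_diagonal, prod_diagonal_apply]

theorem pauliAt_apply (N : ℕ) (c : Fin 3) (t : Fin N) (i j : Fin N → Fin 2) :
    pauliAt N c t i j =
      pauli c (i t) (j t) * ∏ s, if s ≠ t then (if i s = j s then 1 else 0) else 1 := by
  rw [pauliAt, of_apply, Finset.prod_filter]

theorem pauliAt_two_eq_diagonal (N : ℕ) (t : Fin N) :
    pauliAt N 2 t = diagonal fun i => (zSpin (i t) : ℂ) := by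
  ext i j
  rw [pauliAt_apply, pauli_two_eq_diagonal]
  by_cases hij : i = j
  · simp [hij]
  · obtain ⟨s, hs⟩ := Function.ne_iff.mp hij
    rw [diagonal_apply_ne _ hij]
    by_cases hst : s = t
    · subst hst
      rw [diagonal_apply_ne _ hs, zero_mul]
    · exact mul_eq_zero_of_right _ <| Finset.prod_eq_zero (mem_univ s) (by simp [hst, hs])

theorem pauliAt_apply_comp (N : ℕ) (c : Fin 3) (t : Fin N) (σ : Equiv.Perm (Fin N))
    (i j : Fin N → Fin 2) : pauliAt N c t (i ∘ σ) (j ∘ σ) = pauliAt N c (σ t) i j := by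
  simp only [pauliAt_apply, Function.comp_apply]
  congr 1
  conv_rhs => rw [← Equiv.prod_comp σ]
  simp [σ.injective.ne_iff]

theorem sum_pauliAt_two_mul_pauliAt_two (N : ℕ) :
    ∑ a : Fin N, ∑ b : Fin N, pauliAt N 2 a * pauliAt N 2 b =
      diagonal fun i => (magnetization i : ℂ) ^ 2 := by
  ext i j
  by_cases hij : i = j
  · simp [hij, pauliAt_two_eq_diagonal, Matrix.sum_apply, magnetization, sq, Finset.sum_mul_sum]
  · simp [hij, pauliAt_two_eq_diagonal, Matrix.sum_apply]

theorem SMN_pauliTensor_of_forall_eq_two {N L : ℕ} (hN : 2 ≤ N) (hL : L = 2)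
    {m : Fin L → Fin 3} (hm : ∀ k, m k = 2) :
    SMN L N (pauliTensor m) =
      diagonal fun i => ((magnetization i : ℂ) ^ 2 - N) / (N * (N - 1)) := by
  subst hL
  obtain ⟨n, rfl⟩ := Nat.exists_eq_add_of_le' hN
  rw [SMN, pauliTensor_eq_diagonal hm, embedMat_diagonal hN, symmMat_diagonal]
  congr 1
  funext i
  have hpairs : ∑ σ : Equiv.Perm (Fin (n + 2)), ∏ k : Fin 2, (zSpin (i (σ (Fin.castLE hN k))) : ℂ)
      = n ! * ((magnetization i : ℂ) ^ 2 - (n + 2)) := by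
    simp only [Fin.prod_univ_two]
    rw [show Fin.castLE hN 0 = 0 from rfl, show Fin.castLE hN 1 = 1 from rfl,
      sum_perm_mul_apply_zero_apply_one (fun p => (zSpin (i p) : ℂ)) (fun p => zSpin (i p))]
    simp [magnetization, sq, ← Complex.ofReal_mul, zSpin_mul_self]
  have hfac : ((n + 2)! : ℂ) = (n + 2) * (n + 1) * n ! := by
    push_cast [Nat.factorial_succ]
    ring
  have hn : (n ! : ℂ) ≠ 0 := Nat.cast_ne_zero.mpr n.factorial_ne_zero
  have hn1 : (n + 1 : ℂ) ≠ 0 := by exact_mod_cast n.succ_ne_zero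
  have hn2 : (n + 2 : ℂ) ≠ 0 := by exact_mod_cast (n + 1).succ_ne_zero
  rw [show ((n + 2 : ℕ) : ℂ) - 1 = n + 1 by push_cast; ring]
  simp only [Function.comp_apply, hpairs, hfac]
  push_cast
  field_simp

theorem embedMat_one_pauliTensor (n : ℕ) (m : Fin 1 → Fin 3) :
    embedMat 1 (n + 1) (pauliTensor m) = pauliAt (n + 1) (m 0) 0 := by
  ext i j
  have hslots : univ.filter (fun k : Fin (n + 1) => 1 ≤ (k : ℕ)) = univ.filter (· ≠ 0) := by
    ext k
    simp only [mem_filter, mem_univ, true_and, ne_eq, Fin.ext_iff, Fin.val_zero]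
    omega
  simp [embedMat, pauliTensor, pauliAt, hslots]

theorem SMN_pauliTensor_of_forall_eq {N L : ℕ} (hN : 1 ≤ N) (hL : L = 1)
    {m : Fin L → Fin 3} {c : Fin 3} (hm : ∀ k, m k = c) :
    SMN L N (pauliTensor m) = (N : ℂ)⁻¹ • ∑ t, pauliAt N c t := by
  subst hL
  obtain ⟨n, rfl⟩ := Nat.exists_eq_add_of_le' hN
  ext i j
  rw [SMN, embedMat_one_pauliTensor, hm, symmMat_apply]
  simp only [pauliAt_apply_comp]
  rw [sum_perm_apply_zero (fun t => pauliAt (n + 1) c t i j)]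
  have hn : (n ! : ℂ) ≠ 0 := Nat.cast_ne_zero.mpr n.factorial_ne_zero
  simp only [Nat.factorial_succ, nsmul_eq_mul, Matrix.smul_apply, Matrix.sum_apply, smul_eq_mul]
  push_cast
  field_simp

theorem Q_eq_linearCombination (N : ℕ) (p : MvPolynomial (Fin 3) ℂ) :
    Q N p = Finsupp.linearCombination ℂ (Qmon N) (AddMonoidAlgebra.coeffLinearEquiv ℂ p) := by
  rw [Finsupp.linearCombination_apply, AddMonoidAlgebra.coeffLinearEquiv_apply,
    MvPolynomial.sum_def]
  rfl

theorem Q_hCW0 (J B : ℝ) (N : ℕ) :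
    Q N (hCW0 J B) =
      -((J / 2 : ℂ) • Qmon N (Finsupp.single 2 2) + (B : ℂ) • Qmon N (Finsupp.single 0 1)) := by
  rw [Q_eq_linearCombination, hCW0, ← pow_one (MvPolynomial.X 0),
    MvPolynomial.C_mul_X_pow_eq_monomial, MvPolynomial.C_mul_X_pow_eq_monomial, map_neg, map_add,
    map_neg, map_add]
  simp only [← MvPolynomial.single_eq_monomial, AddMonoidAlgebra.coeffLinearEquiv_apply,
    AddMonoidAlgebra.coeff_single, Finsupp.linearCombination_single]

theorem Qmon_z_sq {N : ℕ} (hN : 2 ≤ N) :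
    Qmon N (Finsupp.single 2 2) =
      diagonal fun i => ((magnetization i : ℂ) ^ 2 - N) / (N * (N - 1)) :=
  SMN_pauliTensor_of_forall_eq_two hN (by simp) fun k => by simp [monFun]

theorem Qmon_x {N : ℕ} (hN : 1 ≤ N) :
    Qmon N (Finsupp.single 0 1) = (N : ℂ)⁻¹ • ∑ t, pauliAt N 0 t :=
  SMN_pauliTensor_of_forall_eq hN (by simp) fun k => if_pos (by simpa using k.isLt)

theorem hCW_sub_Q_hCW0 (J B : ℝ) {N : ℕ} (hN : 2 ≤ N) :
    hCW J B N - Q N (hCW0 J B) =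
      diagonal fun i => ((J / 2 * ((magnetization i ^ 2 - N ^ 2) / (N ^ 2 * (N - 1))) : ℝ) : ℂ) := by
  have hN0 : (N : ℂ) ≠ 0 := by exact_mod_cast (by omega : N ≠ 0)
  have hN1 : (N : ℂ) - 1 ≠ 0 := by
    rw [sub_ne_zero]
    exact_mod_cast (by omega : N ≠ 1)
  rw [hCW, Q_hCW0, Qmon_z_sq hN, Qmon_x (by omega), sum_pauliAt_two_mul_pauliAt_two]
  ext i j
  simp only [Matrix.sub_apply, Matrix.add_apply, Matrix.neg_apply, Matrix.smul_apply,
    Matrix.sum_apply, diagonal_apply, smul_eq_mul]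
  split_ifs
  · push_cast
    field_simp
    ring
  · ring

theorem matOpNorm_eq_l2_opNorm {N : ℕ} (A : TP N) : matOpNorm A = ‖A‖ := rfl

theorem abs_curieWeiss_gap_le (J : ℝ) {m N : ℝ} (hN : 2 ≤ N) (hm : |m| ≤ N) :
    |J / 2 * ((m ^ 2 - N ^ 2) / (N ^ 2 * (N - 1)))| ≤ (|J| + 1) / N := by
  have hgap : |m ^ 2 - N ^ 2| ≤ N ^ 2 := by
    rw [abs_le]
    constructor <;> nlinarith [sq_abs m, abs_nonneg m]
  have hD : 0 < N ^ 2 * (N - 1) := by nlinarith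
  calc |J / 2 * ((m ^ 2 - N ^ 2) / (N ^ 2 * (N - 1)))|
      = |J| / 2 * (|m ^ 2 - N ^ 2| / (N ^ 2 * (N - 1))) := by
        rw [abs_mul, abs_div, abs_div, abs_two, abs_of_pos hD]
    _ ≤ |J| / 2 * (N ^ 2 / (N ^ 2 * (N - 1))) := by gcongr
    _ = |J| / (2 * (N - 1)) := by field_simp
    _ ≤ |J| / N := by gcongr; linarith
    _ ≤ (|J| + 1) / N := by gcongr; linarith

/-- Eq. (3.5) of the paper: there is `C > 0` such that
`‖ h^{CW}_{1/N} − Q_{1/N}(h₀^{CW}) ‖ ≤ C/N` for all `N ≥ 2`, in the operator norm on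
`(ℂ²)^{⊗N}`. -/
theorem curieWeiss_eq_Q_up_to_one_over_N (J B : ℝ) :
    ∃ C : ℝ, 0 < C ∧ ∀ N : ℕ, 2 ≤ N →
      matOpNorm (hCW J B N - Q N (hCW0 J B)) ≤ C / N := by
  refine ⟨|J| + 1, by positivity, fun N hN => ?_⟩
  rw [hCW_sub_Q_hCW0 J B hN, matOpNorm_eq_l2_opNorm, l2_opNorm_diagonal,
    pi_norm_le_iff_of_nonneg (by positivity)]
  intro i
  rw [Complex.norm_real, Real.norm_eq_abs]
  exact abs_curieWeiss_gap_le J (by exact_mod_cast hN) (abs_magnetization_le i)
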